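/- There exists an absolute constant C > 0 such that for every prime p and every integer N with 1 ≤ N ≤ p, there exists a subset A ⊆ F_p with |A| = N and max{ |A+A| , |A·A| } ≤ C · (p·N)^{1/2}. -/
import Mathlib


open Pointwise

set_option maxHeartbeats 1000000 in
theorem exists_small_sum_product_set : ∃ C : ℝ, C > 0 ∧
    ∀ (p : ℕ), p.Prime → ∀ N : ℕ, 1 ≤ N → N ≤ p →
      ∃ A : Finset (ZMod p), A.card = N ∧
        (max (A + A).card (A * A).card : ℝ) ≤ C * Real.sqrt ((p : ℝ) * N) := by
  refine ⟨8, by norm_num, ?_⟩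
  intro p hp N hN1 hNp
  haveI : Fact p.Prime := ⟨hp⟩
  haveI : NeZero p := ⟨hp.ne_zero⟩
  have hp2 : 2 ≤ p := hp.two_le
  have hpR : (1:ℝ) ≤ (p:ℝ) := by exact_mod_cast hp.one_le
  have hNR : (1:ℝ) ≤ (N:ℝ) := by exact_mod_cast hN1
  have hsq : Real.sqrt ((p:ℝ) * N) ^ 2 = (p:ℝ) * N :=
    Real.sq_sqrt (by positivity)
  have hsnn : (0:ℝ) ≤ Real.sqrt ((p:ℝ) * N) := Real.sqrt_nonneg _
  have hsqrt1 : (1:ℝ) ≤ Real.sqrt ((p:ℝ) * N) := by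
    rw [show (1:ℝ) = Real.sqrt 1 by simp]
    exact Real.sqrt_le_sqrt (by nlinarith)
  by_cases hcase : p ≤ 16 * N
  · -- trivial case : take any N-element subset
    have hcard : N ≤ (Finset.univ : Finset (ZMod p)).card := by
      simpa [ZMod.card] using hNp
    obtain ⟨A, -, hA⟩ := Finset.exists_subset_card_eq hcard
    refine ⟨A, hA, ?_⟩
    have hple : (p:ℝ) ≤ 8 * Real.sqrt ((p:ℝ) * N) := by
      have h16 : (p:ℝ) ≤ 16 * N := by exact_mod_cast hcase
      nlinarith [hsq, hsnn, hpR]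
    have hb : ∀ B : Finset (ZMod p), (B.card : ℝ) ≤ (p:ℝ) := by
      intro B
      have := Finset.card_le_univ B
      have h2 : B.card ≤ p := by simpa [ZMod.card] using this
      exact_mod_cast h2
    rw [max_le_iff]
    constructor
    · exact_mod_cast (hb _).trans hple
    · exact_mod_cast (hb _).trans hple
  · push_neg at hcase  -- 16 * N < p
    set s := Nat.sqrt (p * N) with hs
    set L := 2 * (s + 1) with hLdef
    have hL0 : 0 < L := by omega
    have hp17 : 17 ≤ p := by omega
    have hss : s * s ≤ p * N := Nat.sqrt_le _
    have hlt : p * N < (s + 1) * (s + 1) := Nat.lt_succ_sqrt _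
    have hs2 : 2 ≤ s := by
      rw [hs, Nat.le_sqrt]
      nlinarith
    have h4s : 4 * s < p := by nlinarith
    have hLp : L ≤ p - 1 := by omega
    -- generator of the unit group
    obtain ⟨u, hu⟩ := IsCyclic.exists_generator (α := (ZMod p)ˣ)
    have hord : orderOf u = p - 1 := by
      rw [orderOf_eq_card_of_forall_mem_zpowers hu, Nat.card_eq_fintype_card,
        ZMod.card_units]
    have key : ∀ v : (ZMod p)ˣ, ∃ n : ℕ, n ≤ p - 2 ∧ u ^ n = v := by
      intro v
      obtain ⟨n, hn⟩ := (Submonoid.mem_powers_iff _ _).1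
        (mem_powers_iff_mem_zpowers.2 (hu v))
      refine ⟨n % (p - 1), ?_, ?_⟩
      · have : n % (p - 1) < p - 1 := Nat.mod_lt _ (by omega)
        omega
      · rw [← hord, pow_mod_orderOf]; exact hn
    classical
    set ind : ZMod p → ℕ := fun x =>
      if h : x = 0 then 0 else (key (Units.mk0 x h)).choose with hinddef
    have hind : ∀ (x : ZMod p) (h : x ≠ 0),
        ind x ≤ p - 2 ∧ ((u : (ZMod p)ˣ) : ZMod p) ^ ind x = x := by
      intro x h
      have := (key (Units.mk0 x h)).choose_spec
      constructor
      · simpa [hinddef, dif_neg h] using this.1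
      · have h2 := congrArg Units.val this.2
        simp only [Units.val_pow_eq_pow_val, Units.val_mk0] at h2
        simpa [hinddef, dif_neg h] using h2
    -- the base interval
    set S : Finset (ZMod p) := (Finset.Icc 1 L).image (Nat.cast : ℕ → ZMod p)
      with hSdef
    have hrep : ∀ x ∈ S, ∃ k, 1 ≤ k ∧ k ≤ L ∧ (k : ZMod p) = x := by
      intro x hx
      rw [hSdef, Finset.mem_image] at hx
      obtain ⟨k, hk, rfl⟩ := hx
      rw [Finset.mem_Icc] at hk
      exact ⟨k, hk.1, hk.2, rfl⟩
    have hSne0 : ∀ x ∈ S, x ≠ 0 := by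
      intro x hx
      obtain ⟨k, hk1, hk2, rfl⟩ := hrep x hx
      intro h0
      have hkp : k < p := by omega
      have := ZMod.val_cast_of_lt hkp
      rw [h0, ZMod.val_zero] at this
      omega
    have hScard : S.card = L := by
      rw [hSdef, Finset.card_image_of_injOn, Nat.card_Icc]
      · omega
      · intro a ha b hb hab
        simp only [Finset.coe_Icc, Set.mem_Icc] at ha hb
        have hap : a < p := by omega
        have hbp : b < p := by omega
        have := ZMod.val_cast_of_lt hap
        rw [hab, ZMod.val_cast_of_lt hbp] at this
        omega
    -- pigeonhole
    set Q := (p - 2) / L + 1 with hQdef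
    have hmaps : ∀ x ∈ S, ind x / L ∈ Finset.range Q := by
      intro x hx
      rw [Finset.mem_range, hQdef]
      have h1 := (hind x (hSne0 x hx)).1
      have := Nat.div_le_div_right (c := L) h1
      omega
    have hQN : Q * N ≤ L := by
      have hQL : Q * L ≤ p - 2 + L := by
        rw [hQdef, add_mul, one_mul]
        have := Nat.div_mul_le_self (p - 2) L
        omega
      have hLP : L ≤ p := by omega
      have hbig : 2 * (p * N) < L * L := by
        rw [hLdef]; nlinarith
      have : Q * N * L ≤ L * L := by
        calc Q * N * L = Q * L * N := by ring
          _ ≤ (p - 2 + L) * N := Nat.mul_le_mul_right _ hQL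
          _ ≤ (p + p) * N := Nat.mul_le_mul_right _ (by omega)
          _ = 2 * (p * N) := by ring
          _ ≤ L * L := hbig.le
      exact Nat.le_of_mul_le_mul_right this hL0
    obtain ⟨t, -, hfiber⟩ :=
      Finset.exists_le_card_fiber_of_mul_le_card_of_maps_to hmaps
        ⟨0, by simp [hQdef]⟩ (by rwa [Finset.card_range, hScard])
    obtain ⟨A, hAsub, hAcard⟩ := Finset.exists_subset_card_eq hfiber
    refine ⟨A, hAcard, ?_⟩
    have hAS : ∀ x ∈ A, x ∈ S ∧ ind x / L = t := by
      intro x hx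
      have := hAsub hx
      rw [Finset.mem_filter] at this
      exact this
    -- sumset bound
    have hsum : A + A ⊆ (Finset.Icc 2 (2 * L)).image (Nat.cast : ℕ → ZMod p) := by
      intro z hz
      rw [Finset.mem_add] at hz
      obtain ⟨a, ha, b, hb, rfl⟩ := hz
      obtain ⟨j, hj1, hj2, rfl⟩ := hrep a (hAS a ha).1
      obtain ⟨k, hk1, hk2, rfl⟩ := hrep b (hAS b hb).1
      rw [Finset.mem_image]
      exact ⟨j + k, Finset.mem_Icc.2 ⟨by omega, by omega⟩, by push_cast; ring⟩
    have hsumcard : (A + A).card ≤ 2 * L := by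
      calc (A + A).card ≤ ((Finset.Icc 2 (2 * L)).image (Nat.cast : ℕ → ZMod p)).card :=
            Finset.card_le_card hsum
        _ ≤ (Finset.Icc 2 (2 * L)).card := Finset.card_image_le
        _ ≤ 2 * L := by rw [Nat.card_Icc]; omega
    -- product set bound
    have hexp : ∀ x ∈ A, t * L ≤ ind x ∧ ind x < t * L + L := by
      intro x hx
      have ht := (hAS x hx).2
      constructor
      · have := Nat.div_mul_le_self (ind x) L
        rw [ht] at this
        omega
      · have h1 : ind x / L < t + 1 := by rw [ht]; omega
        rw [Nat.div_lt_iff_lt_mul hL0, add_mul, one_mul] at h1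
        exact h1
    have hprod : A * A ⊆ (Finset.Ico (2 * t * L) (2 * t * L + 2 * L)).image
        (fun i => ((u : (ZMod p)ˣ) : ZMod p) ^ i) := by
      intro z hz
      rw [Finset.mem_mul] at hz
      obtain ⟨a, ha, b, hb, rfl⟩ := hz
      have ha0 := hSne0 a (hAS a ha).1
      have hb0 := hSne0 b (hAS b hb).1
      rw [Finset.mem_image]
      refine ⟨ind a + ind b, ?_, ?_⟩
      · have h1 := hexp a ha
        have h2 := hexp b hb
        rw [Finset.mem_Ico]
        constructor
        · calc 2 * t * L = t * L + t * L := by ring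
            _ ≤ ind a + ind b := Nat.add_le_add h1.1 h2.1
        · calc ind a + ind b < (t * L + L) + (t * L + L) := Nat.add_lt_add h1.2 h2.2
            _ = 2 * t * L + 2 * L := by ring
      · rw [pow_add, (hind a ha0).2, (hind b hb0).2]
    have hprodcard : (A * A).card ≤ 2 * L := by
      calc (A * A).card
          ≤ ((Finset.Ico (2 * t * L) (2 * t * L + 2 * L)).image
            (fun i => ((u : (ZMod p)ˣ) : ZMod p) ^ i)).card := Finset.card_le_card hprod
        _ ≤ (Finset.Ico (2 * t * L) (2 * t * L + 2 * L)).card := Finset.card_image_le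
        _ ≤ 2 * L := by rw [Nat.card_Ico]; omega
    -- final numeric bound
    have h2L : ((2 * L : ℕ) : ℝ) ≤ 8 * Real.sqrt ((p:ℝ) * N) := by
      have hsR : (s : ℝ) ≤ Real.sqrt ((p:ℝ) * N) := by
        have := Real.nat_sqrt_le_real_sqrt (a := p * N)
        rw [hs]
        push_cast at this ⊢
        exact this
      have : ((2 * L : ℕ) : ℝ) = 4 * s + 4 := by rw [hLdef]; push_cast; ring
      rw [this]
      nlinarith
    rw [max_le_iff]
    exact ⟨le_trans (Nat.cast_le.2 hsumcard) h2L, le_trans (Nat.cast_le.2 hprodcard) h2L⟩
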